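/- Let f be convex with L_f-Lipschitz gradient and g proper lsc convex. For all 0 < γ < 1/L_f and all x, φ^{γ/(1−γL_f)}(x) ≤ φ_γ(x) ≤ φ^γ(x), where φ^β denotes the Moreau envelope of φ = f + g with parameter β and φ_γ the forward-backward envelope. -/

import Mathlib

set_option linter.unusedVariables false
noncomputable section

/-- Euclidean space ℝⁿ. -/
abbrev Eucl (n : ℕ) := EuclideanSpace ℝ (Fin n)

/-- A proper extended-real-valued function: not identically +∞ and nowhere -∞. -/
def ProperFun {n : ℕ} (g : Eucl n → EReal) : Prop := (∃ x, g x ≠ ⊤) ∧ ∀ x, g x ≠ ⊥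

/-- Convexity for extended-real-valued functions. -/
def ConvexFun {n : ℕ} (g : Eucl n → EReal) : Prop :=
  ∀ x y : Eucl n, ∀ a b : ℝ, 0 ≤ a → 0 ≤ b → a + b = 1 →
    g (a • x + b • y) ≤ (a : EReal) * g x + (b : EReal) * g y

/-- `p` is the proximal point `prox_{γ g}(y)`, i.e. it minimizes
`w ↦ g w + (1/(2γ))‖w - y‖²`. -/
def IsProx {n : ℕ} (g : Eucl n → EReal) (γ : ℝ) (y p : Eucl n) : Prop :=
  ∀ w, g p + ((1/(2*γ) * ‖p - y‖^2 : ℝ) : EReal) ≤ g w + ((1/(2*γ) * ‖w - y‖^2 : ℝ) : EReal)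

/-- The Moreau envelope `g^γ(x) = inf_w { g w + (1/(2γ))‖w - x‖² }`. -/
def moreauEnv {n : ℕ} (g : Eucl n → EReal) (γ : ℝ) (x : Eucl n) : EReal :=
  ⨅ w, g w + ((1/(2*γ) * ‖w - x‖^2 : ℝ) : EReal)

/-- The convex subdifferential of an extended-real-valued function. -/
def subdiff {n : ℕ} (φ : Eucl n → EReal) (x : Eucl n) : Set (Eucl n) :=
  {v | ∀ z, φ x + ((inner ℝ v (z - x) : ℝ) : EReal) ≤ φ z}

/-- The forward-backward envelope
`φ_γ(x) = inf_w { f x + ⟨∇f x, w - x⟩ + (1/(2γ))‖w - x‖² + g w }`. -/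
def fbe {n : ℕ} (f : Eucl n → ℝ) (f' : Eucl n → Eucl n) (g : Eucl n → EReal) (γ : ℝ)
    (x : Eucl n) : EReal :=
  ⨅ w, ((f x + (inner ℝ (f' x) (w - x) : ℝ) + 1/(2*γ) * ‖w - x‖^2 : ℝ) : EReal) + g w

/-- The distance (in `EReal`, so `⊤` if the set is empty) from `0` to a set of vectors. -/
def distZero {n : ℕ} (S : Set (Eucl n)) : EReal := ⨅ v ∈ S, ((‖v‖ : ℝ) : EReal)

open scoped RealInnerProductSpace

lemma line_hasDerivAt {n : ℕ} (f : Eucl n → ℝ) (f' : Eucl n → Eucl n)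
    (hgrad : ∀ x, HasGradientAt f (f' x) x) (x v : Eucl n) (t : ℝ) :
    HasDerivAt (fun s : ℝ => f (x + s • v)) ⟪f' (x + t • v), v⟫ t := by
  have hline : HasDerivAt (fun s : ℝ => x + s • v) v t := by
    simpa using ((hasDerivAt_id t).smul_const v).const_add x
  have hf := (hgrad (x + t • v)).hasFDerivAt
  have := hf.comp_hasDerivAt t hline
  simpa [Function.comp_def] using this

/-- Gradient inequality for convex functions. -/
lemma grad_ineq {n : ℕ} (f : Eucl n → ℝ) (f' : Eucl n → Eucl n)
    (hconvf : ConvexOn ℝ Set.univ f) (hgrad : ∀ x, HasGradientAt f (f' x) x)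
    (x w : Eucl n) : f x + ⟪f' x, w - x⟫ ≤ f w := by
  rcases eq_or_ne w x with rfl | hne
  · simp
  · set v := w - x with hv
    have hφ : ConvexOn ℝ Set.univ (fun s : ℝ => f (x + s • v)) := by
      have := hconvf.comp_affineMap
        (AffineMap.const ℝ ℝ x + LinearMap.toAffineMap (LinearMap.toSpanSingleton ℝ _ v))
      simpa [Set.preimage_univ, Function.comp_def] using this
    have hd : HasDerivAt (fun s : ℝ => f (x + s • v)) ⟪f' x, v⟫ 0 := by
      simpa using line_hasDerivAt f f' hgrad x v 0
    have := hφ.le_slope_of_hasDerivAt (Set.mem_univ (0:ℝ)) (Set.mem_univ 1) one_pos hd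
    rw [slope_def_field] at this
    simp only [zero_smul, add_zero, one_smul, sub_zero, div_one] at this
    have hw : x + v = w := by simp [hv]
    rw [hw] at this
    linarith

/-- Descent lemma. -/
lemma descent_lemma {n : ℕ} (f : Eucl n → ℝ) (f' : Eucl n → Eucl n)
    (hgrad : ∀ x, HasGradientAt f (f' x) x) (L : ℝ) (hL : 0 ≤ L)
    (hlip : LipschitzWith (Real.toNNReal L) f') (x w : Eucl n) :
    f w ≤ f x + ⟪f' x, w - x⟫ + L / 2 * ‖w - x‖ ^ 2 := by
  set v := w - x with hv
  set c : ℝ := ⟪f' x, v⟫ with hc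
  set q : ℝ := ‖v‖ ^ 2 with hq
  set h : ℝ → ℝ := fun t => f (x + t • v) - t * c - L / 2 * t ^ 2 * q with hh
  have hderiv : ∀ t : ℝ, HasDerivAt h (⟪f' (x + t • v), v⟫ - c - L * t * q) t := by
    intro t
    have h1 := line_hasDerivAt f f' hgrad x v t
    have h2 : HasDerivAt (fun s : ℝ => s * c) c t := by
      simpa using (hasDerivAt_id t).mul_const c
    have h3 : HasDerivAt (fun s : ℝ => L / 2 * s ^ 2 * q) (L * t * q) t := by
      have : HasDerivAt (fun s : ℝ => s ^ 2) (2 * t) t := by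
        simpa using hasDerivAt_pow 2 t
      have := (this.const_mul (L / 2)).mul_const q
      exact this.congr_deriv (by ring)
    exact (h1.sub h2).sub h3
  have hanti : AntitoneOn h (Set.Icc 0 1) := by
    apply antitoneOn_of_deriv_nonpos (convex_Icc 0 1)
    · exact fun t _ => ((hderiv t).continuousAt).continuousWithinAt
    · exact fun t _ => ((hderiv t).differentiableAt).differentiableWithinAt
    · intro t ht
      rw [interior_Icc] at ht
      rw [(hderiv t).deriv]
      have hb : ⟪f' (x + t • v) - f' x, v⟫ ≤ L * t * q := by
        calc ⟪f' (x + t • v) - f' x, v⟫ ≤ ‖f' (x + t • v) - f' x‖ * ‖v‖ :=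
              real_inner_le_norm _ _
          _ ≤ (L * (t * ‖v‖)) * ‖v‖ := by
              apply mul_le_mul_of_nonneg_right _ (norm_nonneg v)
              have := hlip.dist_le_mul (x + t • v) x
              rw [dist_eq_norm] at this
              calc ‖f' (x + t • v) - f' x‖ ≤ (Real.toNNReal L : ℝ) * ‖t • v‖ := by
                    simpa [dist_eq_norm] using this
                _ = L * (|t| * ‖v‖) := by
                    rw [Real.coe_toNNReal _ hL, norm_smul]; simp
                _ = L * (t * ‖v‖) := by rw [abs_of_nonneg ht.1.le]
          _ = L * t * q := by rw [hq]; ring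
      have : ⟪f' (x + t • v), v⟫ - c = ⟪f' (x + t • v) - f' x, v⟫ := by
        rw [inner_sub_left]
      linarith [hb, this.le, this.ge]
  have := hanti (Set.left_mem_Icc.2 zero_le_one) (Set.right_mem_Icc.2 zero_le_one) zero_le_one
  simp only [hh] at this
  have hw : x + (1:ℝ) • v = w := by simp [hv]
  rw [hw] at this
  simp only [zero_smul, add_zero, zero_mul, one_mul, one_pow, mul_one] at this
  nlinarith [this]

/-- `φ^{γ/(1−γL_f)} ≤ φ_γ ≤ φ^γ` (Moreau envelopes of `φ = f + g`). -/
theorem moreau_le_fbe_le_moreau {n : ℕ} (f : Eucl n → ℝ) (f' : Eucl n → Eucl n)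
    (hconvf : ConvexOn ℝ Set.univ f) (hgrad : ∀ x, HasGradientAt f (f' x) x)
    (Lf : ℝ) (hLf : 0 < Lf) (hlip : LipschitzWith (Real.toNNReal Lf) f')
    (g : Eucl n → EReal) (hgp : ProperFun g) (hglsc : LowerSemicontinuous g)
    (hgconv : ConvexFun g)
    (γ : ℝ) (hγ : 0 < γ) (hγL : γ < 1/Lf) :
    ∀ x : Eucl n,
      moreauEnv (fun w => (f w : EReal) + g w) (γ/(1 - γ*Lf)) x ≤ fbe f f' g γ x ∧
      fbe f f' g γ x ≤ moreauEnv (fun w => (f w : EReal) + g w) γ x := by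
  intro x
  unfold moreauEnv fbe
  have hγLf : γ * Lf < 1 := (lt_div_iff₀ hLf).mp hγL
  have h1 : (0:ℝ) < 1 - γ * Lf := by linarith
  constructor
  · apply le_iInf; intro w
    refine iInf_le_of_le w ?_
    have key : f w + 1/(2*(γ/(1 - γ*Lf))) * ‖w - x‖^2 ≤
        f x + (inner ℝ (f' x) (w - x) : ℝ) + 1/(2*γ) * ‖w - x‖^2 := by
      have hd := descent_lemma f f' hgrad Lf hLf.le hlip x w
      have he : 1/(2*(γ/(1 - γ*Lf))) = 1/(2*γ) - Lf/2 := by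
        field_simp
      rw [he]; linarith
    have hre : ((f w : EReal) + g w) + ((1/(2*(γ/(1 - γ*Lf))) * ‖w - x‖^2 : ℝ) : EReal) =
        ((f w + 1/(2*(γ/(1 - γ*Lf))) * ‖w - x‖^2 : ℝ) : EReal) + g w := by
      rw [EReal.coe_add, add_assoc, add_comm (g w) _, ← add_assoc]
    rw [hre]
    exact add_le_add_left (EReal.coe_le_coe_iff.2 key) _
  · apply le_iInf; intro w
    refine iInf_le_of_le w ?_
    have key : f x + (inner ℝ (f' x) (w - x) : ℝ) + 1/(2*γ) * ‖w - x‖^2 ≤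
        f w + 1/(2*γ) * ‖w - x‖^2 := by
      have := grad_ineq f f' hconvf hgrad x w
      linarith
    have hre : ((f w : EReal) + g w) + ((1/(2*γ) * ‖w - x‖^2 : ℝ) : EReal) =
        ((f w + 1/(2*γ) * ‖w - x‖^2 : ℝ) : EReal) + g w := by
      rw [EReal.coe_add, add_assoc, add_comm (g w) _, ← add_assoc]
    rw [hre]
    exact add_le_add_left (EReal.coe_le_coe_iff.2 key) _
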